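/- arXiv:0905.0602 — 6 statements merged into one kernel-verified Lean document; each statement's English description precedes it below -/
import Mathlib

section
/- Let A be an n×m genotype matrix. Then A admits a directed perfect phylogeny if, and only if, for each pair of columns i, j we have {01,10,11} ⊄ ind^A(i,j), and for each column i the resolution graph G_i contains no cycle of odd total weight. -/
/-!
A weight function on a graph has no cycle of odd total weight iff it is a coboundary mod 2,
i.e. `w(k,l) = s l - s k` for some `s : V → ZMod 2`; such an `s` is read off from the parities
of walks out of a base point of each component, and an odd closed walk of minimal length is a
cycle. It remains to show that a three-gamete resolution exists iff no pair of columns of `A`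
conflicts and every `G_i` carries such a potential.

Given a resolution `B`, two heterozygous sites of a row are resolved alike iff `11` occurs in
`ind^B` at them, so `s k := [11 ∉ ind^B(i,k)]` is a potential on `G_i`. The only edges that need
an argument are the weight-`0` edges `{k,l}` inherited from another `A_j`: a row resolving `k`
and `l` oppositely has the same `≻^A`-maximal heterozygous columns as every other row that is
heterozygous at `k` and `l`, so both rows lie in the same `A_i`.

Conversely, resolving each row of `A_i` by the potential of `G_i`, the edges of weight `0` and `1`
are exactly the constraints excluding a third gamete, and rows in different sets `A_i`, `A_j`
agree by the inherited weight-`0` edges.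
-/

/-- A pair of haplotypes `h`, `h'` explains a genotype `g`:
entries `0`/`1` are copied, and at `2`-entries the haplotypes differ. -/
def ExplainsRow {m : ℕ} (h h' : Fin m → Bool) (g : Fin m → Fin 3) : Prop :=
  ∀ j : Fin m,
    (g j = 0 → h j = false ∧ h' j = false) ∧
    (g j = 1 → h j = true ∧ h' j = true) ∧
    (g j = 2 → h j ≠ h' j)

/-- A `2n × m` haplotype matrix, given by its odd rows `B₁` and even rows `B₂`,
explains an `n × m` genotype matrix `A`. -/
def Explains {n m : ℕ} (B₁ B₂ : Fin n → Fin m → Bool) (A : Fin n → Fin m → Fin 3) : Prop :=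
  ∀ r : Fin n, ExplainsRow (B₁ r) (B₂ r) (A r)

/-- The induced set `ind^B(i,j)` of a haplotype matrix: all pairs `xy` appearing
in columns `i` and `j` in some row of `B`. -/
def indB {n m : ℕ} (B₁ B₂ : Fin n → Fin m → Bool) (i j : Fin m) : Set (Bool × Bool) :=
  {p | ∃ r : Fin n, (B₁ r i = p.1 ∧ B₁ r j = p.2) ∨ (B₂ r i = p.1 ∧ B₂ r j = p.2)}

/-- The three gamete property: `{01,10,11}` is never a subset of an induced set. -/
def ThreeGamete {n m : ℕ} (B₁ B₂ : Fin n → Fin m → Bool) : Prop :=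
  ∀ i j : Fin m,
    ¬ (({(false, true), (true, false), (true, true)} : Set (Bool × Bool)) ⊆ indB B₁ B₂ i j)

/-- The four gamete property: no induced set equals `{00,01,10,11}`. -/
def FourGamete {n m : ℕ} (B₁ B₂ : Fin n → Fin m → Bool) : Prop :=
  ∀ i j : Fin m,
    indB B₁ B₂ i j ≠
      ({(false, false), (false, true), (true, false), (true, true)} : Set (Bool × Bool))

/-- A genotype matrix admits a directed perfect phylogeny if some explaining
haplotype matrix satisfies the three gamete property. -/
def AdmitsDirectedPP {n m : ℕ} (A : Fin n → Fin m → Fin 3) : Prop :=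
  ∃ B₁ B₂ : Fin n → Fin m → Bool, Explains B₁ B₂ A ∧ ThreeGamete B₁ B₂

/-- A genotype matrix admits a perfect phylogeny if some explaining
haplotype matrix satisfies the four gamete property. -/
def AdmitsPP {n m : ℕ} (A : Fin n → Fin m → Fin 3) : Prop :=
  ∃ B₁ B₂ : Fin n → Fin m → Bool, Explains B₁ B₂ A ∧ FourGamete B₁ B₂

/-- Encode a haplotype entry as a genotype entry. -/
def boolToFin3 (b : Bool) : Fin 3 := if b then 1 else 0

/-- The induced set `ind^A(i,j)` of a genotype matrix. -/
def indA {n m : ℕ} (A : Fin n → Fin m → Fin 3) (i j : Fin m) : Set (Bool × Bool) :=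
  {p | ∃ r : Fin n,
    (A r i = boolToFin3 p.1 ∧ A r j = boolToFin3 p.2) ∨
    (A r i = boolToFin3 p.1 ∧ A r j = 2) ∨
    (A r i = 2 ∧ A r j = boolToFin3 p.2)}

/-- Column `i` of `A` is greater than column `j` (written `i ≻^A j`):
`ind^A(i,j) ⊆ {00,10,11}` and the two columns are not identical. -/
def ColGreater {n m : ℕ} (A : Fin n → Fin m → Fin 3) (i j : Fin m) : Prop :=
  indA A i j ⊆ ({(false, false), (true, false), (true, true)} : Set (Bool × Bool)) ∧
  ∃ r : Fin n, A r i ≠ A r j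

/-- The set `A_i`: rows `g` of `A` with `g[i] = 2` such that `i` is `≻^A`-maximal
among the `2`-columns of `g` and has the least index among all such maximal columns. -/
def rowSet {n m : ℕ} (A : Fin n → Fin m → Fin 3) (i : Fin m) : Set (Fin n) :=
  {r | A r i = 2 ∧
    (∀ j : Fin m, j ≠ i → A r j = 2 → ¬ ColGreater A j i) ∧
    (∀ j : Fin m, j ≠ i →
      (A r j = 2 ∧ ∀ k : Fin m, k ≠ j → A r k = 2 → ¬ ColGreater A k j) → i < j)}

/-- `k` is a vertex of the resolution graph `G_i`. -/
def resVert {n m : ℕ} (A : Fin n → Fin m → Fin 3) (i k : Fin m) : Prop :=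
  ∃ r ∈ rowSet A i, A r k = 2

/-- The weighted edges of the resolution graph `G_i`: an edge `{k,l}` of weight `0`
or weight `1`, as prescribed by the construction of resolution graphs. -/
def resEdge {n m : ℕ} (A : Fin n → Fin m → Fin 3) (i : Fin m) (k l : Fin m) (w : ℕ) : Prop :=
  k ≠ l ∧ (∃ r ∈ rowSet A i, A r k = 2 ∧ A r l = 2) ∧
  ((w = 0 ∧
      (((true, true) : Bool × Bool) ∈ indA A k l ∨
        ∃ j : Fin m, j ≠ i ∧ ∃ r₂ ∈ rowSet A j, A r₂ k = 2 ∧ A r₂ l = 2)) ∨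
   (w = 1 ∧ ({(false, true), (true, false)} : Set (Bool × Bool)) ⊆ indA A k l))

/-- An edge-weighted graph, given as a relation `E u v w` ("there is an edge between
`u` and `v` of weight `w`"), contains a cycle of odd total weight: a closed sequence of
pairwise distinct vertices joined by pairwise distinct weighted edges whose weights
sum to an odd number. -/
def HasOddWeightCycle {V : Type*} (E : V → V → ℕ → Prop) : Prop :=
  ∃ (p : ℕ) (c : Fin (p + 1) → V) (w : Fin (p + 1) → ℕ),
    Function.Injective c ∧
    (∀ t : Fin (p + 1), E (c t) (c (t + 1)) (w t)) ∧
    Function.Injective (fun t : Fin (p + 1) => (Sym2.mk (c t, c (t + 1)), w t)) ∧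
    Odd (∑ t, w t)

theorem List.exists_eq_append_of_not_nodup_map {α β : Type*} {f : α → β} {l : List α}
    (h : ¬ (l.map f).Nodup) : ∃ l₁ l₂ l₃ x y, f x = f y ∧ l = l₁ ++ x :: (l₂ ++ y :: l₃) := by
  induction l with
  | nil => simp at h
  | cons x l ih =>
    by_cases hx : f x ∈ l.map f
    · obtain ⟨y, hy, hxy⟩ := List.mem_map.1 hx
      obtain ⟨l₂, l₃, rfl⟩ := List.append_of_mem hy
      exact ⟨[], l₂, l₃, x, y, hxy.symm, rfl⟩
    · obtain ⟨l₁, l₂, l₃, y, z, hyz, rfl⟩ :=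
        ih fun hn => h (List.nodup_cons.2 ⟨hx, hn⟩)
      exact ⟨x :: l₁, l₂, l₃, y, z, hyz, rfl⟩

section WeightedGraph

variable {V : Type*} {E : V → V → ℕ → Prop}

theorem not_hasOddWeightCycle_of_potential (s : V → ZMod 2)
    (hs : ∀ k l w, E k l w → s l = s k + w) : ¬ HasOddWeightCycle E := by
  rintro ⟨p, c, w, -, hc, -, hodd⟩
  have hw : ∀ t, (w t : ZMod 2) = s (c (t + 1)) - s (c t) := fun t => by
    rw [hs _ _ _ (hc t)]; ring
  have hsum : ((∑ t, w t : ℕ) : ZMod 2) = 0 := by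
    rw [Nat.cast_sum, Finset.sum_congr rfl fun t _ => hw t, Finset.sum_sub_distrib, sub_eq_zero]
    exact Equiv.sum_comp (Equiv.addRight 1) (s ∘ c)
  exact Nat.not_even_iff_odd.2 hodd (ZMod.natCast_eq_zero_iff_even.1 hsum)

/-- `IsWalk E a l b`: the steps `l` lead from `a` to `b`, each step recording the vertex it
enters and the weight of the edge it uses. -/
def IsWalk (E : V → V → ℕ → Prop) : V → List (V × ℕ) → V → Prop
  | a, [], b => a = b
  | a, d :: l, b => E a d.1 d.2 ∧ IsWalk E d.1 l b

theorem isWalk_append_iff {a c : V} {l₁ l₂ : List (V × ℕ)} :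
    IsWalk E a (l₁ ++ l₂) c ↔ ∃ b, IsWalk E a l₁ b ∧ IsWalk E b l₂ c := by
  induction l₁ generalizing a with
  | nil => simp [IsWalk]
  | cons d l ih => simp [IsWalk, ih, and_assoc]

theorem IsWalk.append {a b c : V} {l₁ l₂ : List (V × ℕ)} (h₁ : IsWalk E a l₁ b)
    (h₂ : IsWalk E b l₂ c) : IsWalk E a (l₁ ++ l₂) c :=
  isWalk_append_iff.2 ⟨b, h₁, h₂⟩

theorem IsWalk.reverse (hsymm : ∀ k l w, E k l w → E l k w) {a b : V} {l : List (V × ℕ)}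
    (h : IsWalk E a l b) :
    ∃ l', IsWalk E b l' a ∧ (l'.map Prod.snd).sum = (l.map Prod.snd).sum := by
  induction l generalizing a with
  | nil => exact ⟨[], h.symm, rfl⟩
  | cons d l ih =>
    obtain ⟨l', hl', hw⟩ := ih h.2
    exact ⟨l' ++ [(a, d.2)], hl'.append ⟨hsymm _ _ _ h.1, rfl⟩, by simp [hw, add_comm]⟩

theorem IsWalk.rel_getElem {a b : V} {l : List (V × ℕ)} (h : IsWalk E a l b) (t : ℕ)
    (ht : t < l.length) :
    E ((a :: l.map Prod.fst)[t]'(by simp; omega)) l[t].1 l[t].2 := by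
  induction l generalizing a t with
  | nil => simp at ht
  | cons d l ih =>
    rcases t with _ | t
    · exact h.1
    · simpa using ih h.2 t (by simpa using ht)

theorem IsWalk.fst_getElem_of_length_eq {a b : V} {l : List (V × ℕ)} {p : ℕ} (h : IsWalk E a l b)
    (hp : l.length = p + 1) : (l[p]'(by omega)).1 = b := by
  induction l generalizing a p with
  | nil => simp at hp
  | cons d l ih =>
    rcases p with _ | p
    · obtain rfl : l = [] := List.length_eq_zero_iff.1 (by simpa using hp)
      exact h.2
    · simpa using ih h.2 (by simpa using hp)

theorem injective_steps_of_injective {p : ℕ} {c : Fin (p + 1) → V} (w : Fin (p + 1) → ℕ)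
    (hc : Function.Injective c) :
    Function.Injective (fun t : Fin (p + 1) => (Sym2.mk (c t, c (t + 1)), w t)) := by
  intro t u htu
  -- `Sym2.mk` is curried here, so `Sym2.mk (x, y)` is a function; evaluating it at `(x, y)`
  -- recovers the pair
  have h := congrFun (Prod.ext_iff.1 htu).1 (c t, c (t + 1))
  simp only [Sym2.eq_iff, Prod.mk.injEq] at h
  obtain ⟨⟨htu, -⟩, -⟩ | ⟨-, htu, -⟩ := h <;> exact hc htu

theorem IsWalk.hasOddWeightCycle_of_nodup {a : V} {l : List (V × ℕ)} (h : IsWalk E a l a)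
    (hodd : Odd (l.map Prod.snd).sum) (hnd : (l.map Prod.fst).Nodup) :
    HasOddWeightCycle E := by
  obtain ⟨p, hp⟩ : ∃ p, l.length = p + 1 :=
    Nat.exists_eq_add_one.2 (List.length_pos_iff.2 (by rintro rfl; simp at hodd))
  let d : Fin (p + 1) → V × ℕ := fun t => l[t.1]
  have hinj : Function.Injective fun t => (d t).1 := fun t u htu =>
    Fin.ext ((hnd.getElem_inj_iff (hi := by simp; omega) (hj := by simp; omega)).1
      (by simpa using htu))
  refine ⟨p, fun t => (d t).1, fun t => (d (t + 1)).2, hinj, fun t => ?_,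
    injective_steps_of_injective _ hinj, ?_⟩
  · by_cases ht : t = Fin.last p
    · subst ht
      have := h.rel_getElem 0 (by omega)
      simp only [Fin.last_add_one]
      simpa [d, h.fst_getElem_of_length_eq hp] using this
    · have ht' : ((t + 1 : Fin (p + 1)) : ℕ) = t + 1 := by
        rw [Fin.val_add_one, if_neg ht]
      have := h.rel_getElem (t + 1) (by have := Fin.val_lt_last ht; omega)
      simp only [d, ht']
      simpa using this
  · convert hodd using 1
    rw [← Fin.sum_univ_getElem]
    refine (Equiv.sum_comp (Equiv.addRight 1) fun t => (d t).2).trans ?_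
    exact Fintype.sum_equiv (finCongr (by simp [hp])) _ _ fun t => by simp [d]

theorem IsWalk.hasOddWeightCycle_of_odd {a : V} {l : List (V × ℕ)} (h : IsWalk E a l a)
    (hodd : Odd (l.map Prod.snd).sum) : HasOddWeightCycle E := by
  induction hn : l.length using Nat.strong_induction_on generalizing a l with
  | _ n ih =>
  by_cases hnd : (l.map Prod.fst).Nodup
  · exact h.hasOddWeightCycle_of_nodup hodd hnd
  -- a repeated vertex splits the closed walk into two shorter ones, one of which is odd
  obtain ⟨l₁, l₂, l₃, d₁, d₂, hd, rfl⟩ := List.exists_eq_append_of_not_nodup_map hnd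
  rw [show l₁ ++ d₁ :: (l₂ ++ d₂ :: l₃) = (l₁ ++ [d₁]) ++ ((l₂ ++ [d₂]) ++ l₃) by simp]
    at h hodd hn
  obtain ⟨b₁, h₁, b₂, h₂, h₃⟩ : ∃ b₁, IsWalk E a (l₁ ++ [d₁]) b₁ ∧
      ∃ b₂, IsWalk E b₁ (l₂ ++ [d₂]) b₂ ∧ IsWalk E b₂ l₃ a := by
    simpa only [isWalk_append_iff] using h
  obtain rfl : d₁.1 = b₁ := by simpa using h₁.fst_getElem_of_length_eq (p := l₁.length) (by simp)
  obtain rfl : d₂.1 = b₂ := by simpa using h₂.fst_getElem_of_length_eq (p := l₂.length) (by simp)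
  rw [← hd] at h₂ h₃
  simp only [List.map_append, List.sum_append, List.length_append] at hodd hn
  rcases Nat.even_or_odd ((l₂ ++ [d₂]).map Prod.snd).sum with heven | hinner
  · refine ih _ (by simp at hn ⊢; omega) (h₁.append h₃) ?_ rfl
    simp only [List.map_append, List.sum_append] at heven ⊢
    obtain ⟨k, hk⟩ := heven
    obtain ⟨j, hj⟩ := hodd
    exact ⟨j - k, by omega⟩
  · exact ih _ (by simp at hn ⊢; omega) h₂ hinner rfl

theorem exists_potential_of_not_hasOddWeightCycle (hsymm : ∀ k l w, E k l w → E l k w)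
    (hE : ¬ HasOddWeightCycle E) : ∃ s : V → ZMod 2, ∀ k l w, E k l w → s l = s k + w := by
  have hpar : ∀ {a b : V} {l₁ l₂ : List (V × ℕ)}, IsWalk E a l₁ b → IsWalk E a l₂ b →
      ((l₁.map Prod.snd).sum : ZMod 2) = (l₂.map Prod.snd).sum := by
    intro a b l₁ l₂ h₁ h₂
    obtain ⟨l₂', h₂', hw⟩ := h₂.reverse hsymm
    have heven : Even ((l₁ ++ l₂').map Prod.snd).sum :=
      Nat.not_odd_iff_even.1 fun hodd => hE ((h₁.append h₂').hasOddWeightCycle_of_odd hodd)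
    rw [← ZMod.natCast_eq_zero_iff_even, List.map_append, List.sum_append, hw,
      Nat.cast_add] at heven
    exact CharTwo.add_eq_zero.1 heven
  -- `s v` is the parity of a walk to `v` from a chosen vertex of its component
  let S : Setoid V :=
    { r a b := ∃ l, IsWalk E a l b
      iseqv := ⟨fun _ => ⟨[], rfl⟩, fun ⟨_, h⟩ => (h.reverse hsymm).imp fun _ h => h.1,
        fun ⟨_, h₁⟩ ⟨_, h₂⟩ => ⟨_, h₁.append h₂⟩⟩ }
  choose lw hlw using fun v => Quotient.exact (Quotient.out_eq (Quotient.mk S v))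
  refine ⟨fun v => ((lw v).map Prod.snd).sum, fun k l w hkl => ?_⟩
  have hkl' : Quotient.mk S k = Quotient.mk S l := Quotient.sound ⟨[(l, w)], hkl, rfl⟩
  have := hpar (hlw l) (hkl' ▸ (hlw k).append (show IsWalk E k [(l, w)] l from ⟨hkl, rfl⟩))
  simpa using this

end WeightedGraph

section Haplotypes

variable {n m : ℕ} {A : Fin n → Fin m → Fin 3} {B₁ B₂ : Fin n → Fin m → Bool}

@[simp] lemma boolToFin3_false : boolToFin3 false = 0 := rfl

@[simp] lemma boolToFin3_true : boolToFin3 true = 1 := rfl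

lemma eq_boolToFin3_decide {a : Fin 3} (h : a ≠ 2) : a = boolToFin3 (decide (a = 1)) := by
  revert h; fin_cases a <;> decide

lemma exists_eq_boolToFin3 {a : Fin 3} (h : a ≠ 2) : ∃ b, a = boolToFin3 b :=
  ⟨_, eq_boolToFin3_decide h⟩

lemma mem_indA_comm {x y : Fin m} {a b : Bool} : (a, b) ∈ indA A x y ↔ (b, a) ∈ indA A y x := by
  constructor <;> rintro ⟨r, h⟩ <;> exact ⟨r, by tauto⟩

lemma mem_indB_comm {x y : Fin m} {a b : Bool} :
    (a, b) ∈ indB B₁ B₂ x y ↔ (b, a) ∈ indB B₁ B₂ y x := by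
  constructor <;> rintro ⟨r, h⟩ <;> exact ⟨r, by tauto⟩

lemma mem_indA_of_two_right {r : Fin n} {x y : Fin m} {a : Bool} (hx : A r x = boolToFin3 a)
    (hy : A r y = 2) (b : Bool) : (a, b) ∈ indA A x y :=
  ⟨r, Or.inr (Or.inl ⟨hx, hy⟩)⟩

lemma Explains.eq_of_eq_boolToFin3 (hE : Explains B₁ B₂ A) {r : Fin n} {c : Fin m} {b : Bool}
    (h : A r c = boolToFin3 b) : B₁ r c = b ∧ B₂ r c = b := by
  cases b
  exacts [(hE r c).1 h, (hE r c).2.1 h]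

lemma Explains.snd_eq_not_fst (hE : Explains B₁ B₂ A) {r : Fin n} {c : Fin m}
    (h : A r c = 2) : B₂ r c = !B₁ r c := by
  have := (hE r c).2.2 h
  revert this; cases B₁ r c <;> cases B₂ r c <;> decide

lemma indA_subset_indB (hE : Explains B₁ B₂ A) (x y : Fin m) :
    indA A x y ⊆ indB B₁ B₂ x y := by
  rintro ⟨a, b⟩ ⟨r, ⟨hx, hy⟩ | ⟨hx, hy⟩ | ⟨hx, hy⟩⟩
  · exact ⟨r, Or.inl ⟨(hE.eq_of_eq_boolToFin3 hx).1, (hE.eq_of_eq_boolToFin3 hy).1⟩⟩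
  · have hx' := hE.eq_of_eq_boolToFin3 hx
    have hy' := hE.snd_eq_not_fst hy
    refine ⟨r, ?_⟩
    cases b <;> cases h : B₁ r y <;> simp_all
  · have hx' := hE.snd_eq_not_fst hx
    have hy' := hE.eq_of_eq_boolToFin3 hy
    refine ⟨r, ?_⟩
    cases a <;> cases h : B₁ r x <;> simp_all

lemma mem_indB_of_ne_two (hE : Explains B₁ B₂ A) {r : Fin n} {x y : Fin m} (hx : A r x ≠ 2)
    (hy : A r y = 2) : (B₁ r x, true) ∈ indB B₁ B₂ x y := by
  obtain ⟨b, hb⟩ := exists_eq_boolToFin3 hx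
  have hx' := hE.eq_of_eq_boolToFin3 hb
  have hy' := hE.snd_eq_not_fst hy
  refine ⟨r, ?_⟩
  cases h : B₁ r y <;> simp_all

lemma mem_indB_of_resolves_eq (hE : Explains B₁ B₂ A) {r : Fin n} {x y : Fin m}
    (hx : A r x = 2) (hy : A r y = 2) (h : B₁ r x = B₁ r y) :
    (true, true) ∈ indB B₁ B₂ x y := by
  have hx' := hE.snd_eq_not_fst hx
  have hy' := hE.snd_eq_not_fst hy
  refine ⟨r, ?_⟩
  cases h' : B₁ r y <;> simp_all

lemma mem_indB_of_resolves_ne (hE : Explains B₁ B₂ A) {r : Fin n} {x y : Fin m}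
    (hx : A r x = 2) (hy : A r y = 2) (h : B₁ r x ≠ B₁ r y) :
    (false, true) ∈ indB B₁ B₂ x y ∧ (true, false) ∈ indB B₁ B₂ x y := by
  have hx' := hE.snd_eq_not_fst hx
  have hy' := hE.snd_eq_not_fst hy
  refine ⟨⟨r, ?_⟩, ⟨r, ?_⟩⟩ <;> cases h' : B₁ r y <;> cases h'' : B₁ r x <;> simp_all

lemma ThreeGamete.not_mem (hT : ThreeGamete B₁ B₂) {x y : Fin m}
    (h01 : (false, true) ∈ indB B₁ B₂ x y) (h10 : (true, false) ∈ indB B₁ B₂ x y) :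
    (true, true) ∉ indB B₁ B₂ x y := fun h11 =>
  hT x y (by simp [Set.insert_subset_iff, h01, h10, h11])

theorem resolves_eq_iff (hE : Explains B₁ B₂ A) (hT : ThreeGamete B₁ B₂) {r : Fin n}
    {x y : Fin m} (hx : A r x = 2) (hy : A r y = 2) :
    B₁ r x = B₁ r y ↔ (true, true) ∈ indB B₁ B₂ x y := by
  refine ⟨mem_indB_of_resolves_eq hE hx hy, fun h11 => ?_⟩
  by_contra hne
  obtain ⟨h01, h10⟩ := mem_indB_of_resolves_ne hE hx hy hne
  exact hT.not_mem h01 h10 h11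

end Haplotypes

section ColumnOrder

variable {n m : ℕ} {A : Fin n → Fin m → Fin 3} {B₁ B₂ : Fin n → Fin m → Bool}

lemma colGreater_irrefl (x : Fin m) : ¬ ColGreater A x x := fun ⟨_, _, h⟩ => h rfl

/-- Scoring entries `0 ↦ 0`, `2 ↦ 1`, `1 ↦ 2`: `z ≻^A x` forbids exactly the rows where
`x` outscores `z`. -/
def entryScore (a : Fin 3) : ℕ := ![0, 2, 1] a

def colScore (A : Fin n → Fin m → Fin 3) (x : Fin m) : ℕ := ∑ r, entryScore (A r x)

lemma entryScore_le_of_not_mem_indA {z x : Fin m} (h : (false, true) ∉ indA A z x)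
    (r : Fin n) : entryScore (A r x) ≤ entryScore (A r z) := by
  have key : ∀ a b : Fin 3, (a = 0 ∧ b = 1 ∨ a = 0 ∧ b = 2 ∨ a = 2 ∧ b = 1) ∨
      entryScore b ≤ entryScore a := by decide
  rcases key (A r z) (A r x) with hbad | hle
  · exact absurd ⟨r, by simpa using hbad⟩ h
  · exact hle

lemma colScore_lt_of_colGreater {z x : Fin m} (h : ColGreater A z x) :
    colScore A x < colScore A z := by
  have h01 : (false, true) ∉ indA A z x := fun h01 => by simpa using h.1 h01
  obtain ⟨r, hr⟩ := h.2
  refine Finset.sum_lt_sum (fun r _ => entryScore_le_of_not_mem_indA h01 r)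
    ⟨r, Finset.mem_univ _, lt_of_le_of_ne (entryScore_le_of_not_mem_indA h01 r) ?_⟩
  have hinj : Function.Injective entryScore := by decide
  exact fun heq => hr (hinj heq).symm

lemma colGreater_of_dominates (hE : Explains B₁ B₂ A) {z x : Fin m}
    (h01 : (false, true) ∉ indB B₁ B₂ z x) (h10 : (true, false) ∈ indB B₁ B₂ z x) :
    ColGreater A z x := by
  refine ⟨fun p hp => ?_, ?_⟩
  · rcases p with ⟨_ | _, _ | _⟩
    · simp
    · exact absurd (indA_subset_indB hE z x hp) h01
    · simp
    · simp
  · by_contra! hcol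
    obtain ⟨r, h⟩ := h10
    by_cases hz : A r z = 2
    · have hx : A r x = 2 := hcol r ▸ hz
      have := hE.snd_eq_not_fst hz
      have := hE.snd_eq_not_fst hx
      exact h01 ⟨r, by cases h' : B₁ r z <;> simp_all⟩
    · obtain ⟨b, hb⟩ := exists_eq_boolToFin3 hz
      have := hE.eq_of_eq_boolToFin3 hb
      have := hE.eq_of_eq_boolToFin3 (hcol r ▸ hb)
      simp_all

end ColumnOrder

section RowSets

variable {n m : ℕ} {A : Fin n → Fin m → Fin 3}

def IsMaxTwoCol (A : Fin n → Fin m → Fin 3) (r : Fin n) (x : Fin m) : Prop :=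
  A r x = 2 ∧ ∀ z, A r z = 2 → ¬ ColGreater A z x

lemma isMaxTwoCol_iff_of_ne {r : Fin n} {x : Fin m} :
    IsMaxTwoCol A r x ↔ A r x = 2 ∧ ∀ z, z ≠ x → A r z = 2 → ¬ ColGreater A z x := by
  refine and_congr_right fun _ => ⟨fun h z _ => h z, fun h z hz => ?_⟩
  rcases eq_or_ne z x with rfl | hzx
  exacts [colGreater_irrefl z, h z hzx hz]

lemma mem_rowSet_iff {r : Fin n} {i : Fin m} :
    r ∈ rowSet A i ↔ IsMaxTwoCol A r i ∧ ∀ j, IsMaxTwoCol A r j → i ≤ j := by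
  constructor
  · rintro ⟨hi, hmax, hleast⟩
    refine ⟨isMaxTwoCol_iff_of_ne.2 ⟨hi, hmax⟩, fun j hj => ?_⟩
    rcases eq_or_ne j i with rfl | hji
    exacts [le_rfl, (hleast j hji (isMaxTwoCol_iff_of_ne.1 hj)).le]
  · rintro ⟨hi, hleast⟩
    obtain ⟨hi2, hmax⟩ := isMaxTwoCol_iff_of_ne.1 hi
    exact ⟨hi2, hmax, fun j hji hj => (hleast j (isMaxTwoCol_iff_of_ne.2 hj)).lt_of_ne hji.symm⟩

lemma eq_of_mem_rowSet {r : Fin n} {i j : Fin m} (hi : r ∈ rowSet A i) (hj : r ∈ rowSet A j) :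
    i = j := by
  rw [mem_rowSet_iff] at hi hj
  exact le_antisymm (hi.2 j hj.1) (hj.2 i hi.1)

lemma exists_mem_rowSet {r : Fin n} {c : Fin m} (hc : A r c = 2) : ∃ i, r ∈ rowSet A i := by
  classical
  obtain ⟨x, hx, hmax⟩ := (Finset.univ.filter fun z => A r z = 2).exists_max_image (colScore A)
    ⟨c, by simpa using hc⟩
  have hx' : IsMaxTwoCol A r x := ⟨by simpa using hx, fun z hz hzx =>
    (colScore_lt_of_colGreater hzx).not_ge (hmax z (by simpa using hz))⟩
  obtain ⟨i, hi, hmin⟩ := (Finset.univ.filter fun j => IsMaxTwoCol A r j).exists_min_image id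
    ⟨x, by simpa using hx'⟩
  exact ⟨i, mem_rowSet_iff.2 ⟨by simpa using hi, fun j hj => hmin j (by simpa using hj)⟩⟩

end RowSets

section Core

variable {n m : ℕ} {A : Fin n → Fin m → Fin 3} {B₁ B₂ : Fin n → Fin m → Bool}

theorem IsMaxTwoCol.of_resolves_ne (hE : Explains B₁ B₂ A) (hT : ThreeGamete B₁ B₂)
    {r r₂ : Fin n} {k l x : Fin m} (hk : A r k = 2) (hl : A r l = 2) (hk₂ : A r₂ k = 2)
    (hl₂ : A r₂ l = 2) (hkl : B₁ r k ≠ B₁ r l) (hx : IsMaxTwoCol A r x) :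
    IsMaxTwoCol A r₂ x := by
  wlog hxk : B₁ r x = B₁ r k generalizing k l
  · refine this hl hk hl₂ hk₂ (Ne.symm hkl) ?_
    revert hxk hkl; cases B₁ r x <;> cases B₁ r k <;> cases B₁ r l <;> decide
  have hkl₂ : B₁ r₂ k ≠ B₁ r₂ l := by
    rwa [Ne, resolves_eq_iff hE hT hk₂ hl₂, ← resolves_eq_iff hE hT hk hl]
  have hx11k : (true, true) ∈ indB B₁ B₂ x k := (resolves_eq_iff hE hT hx.1 hk).1 hxk
  -- column `x` contains column `k`: otherwise `k ≻^A x`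
  have hdom : (false, true) ∉ indB B₁ B₂ x k := fun h01 =>
    hx.2 k hk (colGreater_of_dominates hE
      (mem_indB_comm.not.1 fun h10 => hT.not_mem h01 h10 hx11k) (mem_indB_comm.1 h01))
  have hxl : (true, true) ∉ indB B₁ B₂ x l := by
    rwa [← resolves_eq_iff hE hT hx.1 hl, hxk]
  have hx₂ : A r₂ x = 2 := by
    by_contra hne
    have hxk' := mem_indB_of_ne_two hE hne hk₂
    have hxl' := mem_indB_of_ne_two hE hne hl₂
    cases h : B₁ r₂ x
    exacts [hdom (h ▸ hxk'), hxl (h ▸ hxl')]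
  have hxk₂ : B₁ r₂ x = B₁ r₂ k := (resolves_eq_iff hE hT hx₂ hk₂).2 hx11k
  refine ⟨hx₂, fun z hz hzx => ?_⟩
  rcases eq_or_ne (A r z) 2 with hz2 | hz2
  · exact hx.2 z hz2 hzx
  obtain ⟨b, hb⟩ := exists_eq_boolToFin3 hz2
  cases b
  · simpa using hzx.1 (mem_indA_of_two_right hb hx.1 true)
  · have hzx₂ := (resolves_eq_iff hE hT hz hx₂).2
      (indA_subset_indB hE z x (mem_indA_of_two_right hb hx.1 true))
    have hzl₂ := (resolves_eq_iff hE hT hz hl₂).2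
      (indA_subset_indB hE z l (mem_indA_of_two_right hb hl true))
    exact hkl₂ (hxk₂.symm.trans (hzx₂.symm.trans hzl₂))

theorem eq_of_mem_rowSet_of_resolves_ne (hE : Explains B₁ B₂ A) (hT : ThreeGamete B₁ B₂)
    {r r₂ : Fin n} {i j k l : Fin m} (hr : r ∈ rowSet A i) (hr₂ : r₂ ∈ rowSet A j)
    (hk : A r k = 2) (hl : A r l = 2) (hk₂ : A r₂ k = 2) (hl₂ : A r₂ l = 2)
    (hkl : B₁ r k ≠ B₁ r l) : i = j := by
  have hkl₂ : B₁ r₂ k ≠ B₁ r₂ l := by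
    rwa [Ne, resolves_eq_iff hE hT hk₂ hl₂, ← resolves_eq_iff hE hT hk hl]
  rw [mem_rowSet_iff] at hr hr₂
  exact le_antisymm (hr.2 j (hr₂.1.of_resolves_ne hE hT hk₂ hl₂ hk hl hkl₂))
    (hr₂.2 i (hr.1.of_resolves_ne hE hT hk hl hk₂ hl₂ hkl))

end Core

lemma ZMod.eq_add_natCast_iff_of_le_one {a b : ZMod 2} {w : ℕ} (hw : w ≤ 1) :
    b = a + w ↔ (a = b ↔ w = 0) := by
  interval_cases w <;> revert a b <;> decide

section ResolutionGraph

variable {n m : ℕ} {A : Fin n → Fin m → Fin 3} {B₁ B₂ : Fin n → Fin m → Bool}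

lemma resEdge_symm {i k l : Fin m} {w : ℕ} (h : resEdge A i k l w) : resEdge A i l k w := by
  obtain ⟨hkl, ⟨r, hr, hk, hl⟩, ⟨rfl, h11 | ⟨j, hj, r₂, hr₂, hk₂, hl₂⟩⟩ | ⟨rfl, h⟩⟩ := h
  · exact ⟨hkl.symm, ⟨r, hr, hl, hk⟩, Or.inl ⟨rfl, Or.inl (mem_indA_comm.1 h11)⟩⟩
  · exact ⟨hkl.symm, ⟨r, hr, hl, hk⟩, Or.inl ⟨rfl, Or.inr ⟨j, hj, r₂, hr₂, hl₂, hk₂⟩⟩⟩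
  · simp only [Set.insert_subset_iff, Set.singleton_subset_iff] at h
    exact ⟨hkl.symm, ⟨r, hr, hl, hk⟩, Or.inr ⟨rfl, by
      simp [Set.insert_subset_iff, mem_indA_comm.1 h.1, mem_indA_comm.1 h.2]⟩⟩

lemma resEdge_weight_le_one {i k l : Fin m} {w : ℕ} (h : resEdge A i k l w) : w ≤ 1 := by
  rcases h.2.2 with ⟨rfl, -⟩ | ⟨rfl, -⟩ <;> norm_num

theorem resolves_eq_iff_of_resEdge (hE : Explains B₁ B₂ A) (hT : ThreeGamete B₁ B₂)
    {r : Fin n} {i k l : Fin m} {w : ℕ} (hr : r ∈ rowSet A i) (hk : A r k = 2) (hl : A r l = 2)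
    (he : resEdge A i k l w) : B₁ r k = B₁ r l ↔ w = 0 := by
  obtain ⟨-, -, ⟨rfl, h11 | ⟨j, hji, r₂, hr₂, hk₂, hl₂⟩⟩ | ⟨rfl, h⟩⟩ := he
  · simpa using (resolves_eq_iff hE hT hk hl).2 (indA_subset_indB hE k l h11)
  · simp only [iff_true]
    by_contra hkl
    exact hji (eq_of_mem_rowSet_of_resolves_ne hE hT hr hr₂ hk hl hk₂ hl₂ hkl).symm
  · simp only [Set.insert_subset_iff, Set.singleton_subset_iff] at h
    simpa [resolves_eq_iff hE hT hk hl] using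
      hT.not_mem (indA_subset_indB hE k l h.1) (indA_subset_indB hE k l h.2)

theorem exists_potential_resEdge (hE : Explains B₁ B₂ A) (hT : ThreeGamete B₁ B₂) (i : Fin m) :
    ∃ s : Fin m → ZMod 2, ∀ k l w, resEdge A i k l w → s l = s k + w := by
  classical
  refine ⟨fun k => if (true, true) ∈ indB B₁ B₂ i k then 0 else 1, fun k l w he => ?_⟩
  obtain ⟨r, hr, hk, hl⟩ := he.2.1
  rw [ZMod.eq_add_natCast_iff_of_le_one (resEdge_weight_le_one he),
    ← resolves_eq_iff_of_resEdge hE hT hr hk hl he]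
  simp only [← resolves_eq_iff hE hT hr.1 hk, ← resolves_eq_iff hE hT hr.1 hl]
  cases B₁ r i <;> cases B₁ r k <;> cases B₁ r l <;> decide

end ResolutionGraph

section Resolution

variable {n m : ℕ} {A : Fin n → Fin m → Fin 3}

def resolveFst (A : Fin n → Fin m → Fin 3) (φ : Fin n → Fin m → Bool) (r : Fin n)
    (c : Fin m) : Bool :=
  if A r c = 2 then φ r c else decide (A r c = 1)

def resolveSnd (A : Fin n → Fin m → Fin 3) (φ : Fin n → Fin m → Bool) (r : Fin n)
    (c : Fin m) : Bool :=
  if A r c = 2 then !φ r c else decide (A r c = 1)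

lemma explains_resolve (φ : Fin n → Fin m → Bool) :
    Explains (resolveFst A φ) (resolveSnd A φ) A := fun r c =>
  ⟨fun h => by simp [resolveFst, resolveSnd, h], fun h => by simp [resolveFst, resolveSnd, h],
    fun h => by simp [resolveFst, resolveSnd, h]⟩

lemma mem_indB_resolve {φ : Fin n → Fin m → Bool} {x y : Fin m} {p : Bool × Bool}
    (hp : p ∈ indB (resolveFst A φ) (resolveSnd A φ) x y) :
    p ∈ indA A x y ∨ ∃ r, A r x = 2 ∧ A r y = 2 ∧ (p.1 = p.2 ↔ φ r x = φ r y) := by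
  obtain ⟨a, b⟩ := p
  obtain ⟨r, h⟩ := hp
  by_cases hx : A r x = 2 <;> by_cases hy : A r y = 2 <;>
    simp only [resolveFst, resolveSnd, hx, hy, if_true, if_false] at h
  · right
    refine ⟨r, hx, hy, ?_⟩
    rcases h with ⟨rfl, rfl⟩ | ⟨rfl, rfl⟩ <;> simp
  · left
    refine ⟨r, Or.inr (Or.inr ⟨hx, ?_⟩)⟩
    rcases h with ⟨-, rfl⟩ | ⟨-, rfl⟩ <;> exact eq_boolToFin3_decide hy
  · left
    refine ⟨r, Or.inr (Or.inl ⟨?_, hy⟩)⟩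
    rcases h with ⟨rfl, -⟩ | ⟨rfl, -⟩ <;> exact eq_boolToFin3_decide hx
  · left
    refine ⟨r, Or.inl ?_⟩
    rcases h with ⟨rfl, rfl⟩ | ⟨rfl, rfl⟩ <;>
      exact ⟨eq_boolToFin3_decide hx, eq_boolToFin3_decide hy⟩

theorem threeGamete_resolve {φ : Fin n → Fin m → Bool}
    (hC1 : ∀ i j : Fin m,
      ¬ (({(false, true), (true, false), (true, true)} : Set (Bool × Bool)) ⊆ indA A i j))
    (hsame : ∀ r x y, A r x = 2 → A r y = 2 → x ≠ y → (true, true) ∈ indA A x y →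
      φ r x = φ r y)
    (hdiff : ∀ r x y, A r x = 2 → A r y = 2 → x ≠ y → (false, true) ∈ indA A x y →
      (true, false) ∈ indA A x y → φ r x ≠ φ r y)
    (hcons : ∀ r r' x y, A r x = 2 → A r y = 2 → A r' x = 2 → A r' y = 2 → x ≠ y →
      φ r x = φ r y → φ r' x = φ r' y) :
    ThreeGamete (resolveFst A φ) (resolveSnd A φ) := by
  intro x y hsub
  simp only [Set.insert_subset_iff, Set.singleton_subset_iff] at hsub
  obtain ⟨h01, h10, h11⟩ := hsub
  rcases eq_or_ne x y with rfl | hxy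
  · obtain ⟨r, h | h⟩ := h01 <;> simp at h
  have hA : ∀ {a b : Bool}, a ≠ b → (a, b) ∈ indB (resolveFst A φ) (resolveSnd A φ) x y →
      (∀ r, A r x = 2 → A r y = 2 → φ r x = φ r y) → (a, b) ∈ indA A x y := by
    intro a b hab hp hall
    rcases mem_indB_resolve hp with h | ⟨r, hx, hy, hiff⟩
    · exact h
    · exact absurd (hiff.2 (hall r hx hy)) hab
  rcases mem_indB_resolve h11 with h11 | ⟨r, hx, hy, hiff⟩
  · have hall := fun r hx hy => hsame r x y hx hy hxy h11
    exact hC1 x y (by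
      simp [Set.insert_subset_iff, hA (by decide) h01 hall, hA (by decide) h10 hall, h11])
  · have hr : φ r x = φ r y := hiff.1 rfl
    have hall := fun r' hx' hy' => hcons r r' x y hx hy hx' hy' hxy hr
    exact hdiff r x y hx hy hxy (hA (by decide) h01 hall) (hA (by decide) h10 hall) hr

theorem admitsDirectedPP_of_potentials
    (hC1 : ∀ i j : Fin m,
      ¬ (({(false, true), (true, false), (true, true)} : Set (Bool × Bool)) ⊆ indA A i j))
    (hpot : ∀ i, ∃ s : Fin m → ZMod 2, ∀ k l w, resEdge A i k l w → s l = s k + w) :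
    AdmitsDirectedPP A := by
  classical
  choose s hs using hpot
  have hphase : ∀ r, ∃ f : Fin m → Bool, ∀ i, r ∈ rowSet A i → ∀ c, f c = decide (s i c = 1) := by
    intro r
    by_cases h : ∃ i, r ∈ rowSet A i
    · obtain ⟨i, hi⟩ := h
      exact ⟨fun c => decide (s i c = 1), fun j hj c => by rw [eq_of_mem_rowSet hi hj]⟩
    · exact ⟨fun _ => false, fun i hi => absurd ⟨i, hi⟩ h⟩
  choose φ hφ using hphase
  have hedge : ∀ r i x y w, r ∈ rowSet A i → resEdge A i x y w → (φ r x = φ r y ↔ w = 0) := by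
    intro r i x y w hr he
    have key : ∀ a b : ZMod 2, (decide (a = 1) = decide (b = 1)) ↔ a = b := by decide
    rw [hφ r i hr, hφ r i hr, key, ← ZMod.eq_add_natCast_iff_of_le_one (resEdge_weight_le_one he)]
    exact hs i x y w he
  refine ⟨_, _, explains_resolve φ, threeGamete_resolve hC1 ?_ ?_ ?_⟩
  · intro r x y hx hy hxy h11
    obtain ⟨i, hi⟩ := exists_mem_rowSet hx
    exact (hedge r i x y 0 hi ⟨hxy, ⟨r, hi, hx, hy⟩, Or.inl ⟨rfl, Or.inl h11⟩⟩).2 rfl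
  · intro r x y hx hy hxy h01 h10
    obtain ⟨i, hi⟩ := exists_mem_rowSet hx
    rw [Ne, hedge r i x y 1 hi ⟨hxy, ⟨r, hi, hx, hy⟩, Or.inr ⟨rfl, by
      simp [Set.insert_subset_iff, h01, h10]⟩⟩]
    exact one_ne_zero
  · intro r r' x y hx hy hx' hy' hxy hr
    obtain ⟨i, hi⟩ := exists_mem_rowSet hx
    obtain ⟨j, hj⟩ := exists_mem_rowSet hx'
    rcases eq_or_ne i j with rfl | hij
    · rwa [hφ r' i hj, hφ r' i hj, ← hφ r i hi, ← hφ r i hi]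
    · exact (hedge r' j x y 0 hj
        ⟨hxy, ⟨r', hj, hx', hy'⟩, Or.inl ⟨rfl, Or.inr ⟨i, hij, r, hi, hx, hy⟩⟩⟩).2 rfl

end Resolution

/-- An `n × m` genotype matrix `A` admits a directed perfect phylogeny if, and only if,
for each pair of columns `i, j` we have `{01,10,11} ⊄ ind^A(i,j)`, and for each column
`i` the resolution graph `G_i` contains no cycle of odd total weight. -/
theorem dpph_characterization {n m : ℕ} (A : Fin n → Fin m → Fin 3) :
    AdmitsDirectedPP A ↔
      ((∀ i j : Fin m,
          ¬ (({(false, true), (true, false), (true, true)} : Set (Bool × Bool)) ⊆ indA A i j)) ∧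
       (∀ i : Fin m, ¬ HasOddWeightCycle (resEdge A i))) := by
  constructor
  · rintro ⟨B₁, B₂, hE, hT⟩
    refine ⟨fun i j hsub => hT i j (hsub.trans (indA_subset_indB hE i j)), fun i => ?_⟩
    obtain ⟨s, hs⟩ := exists_potential_resEdge hE hT i
    exact not_hasOddWeightCycle_of_potential s hs
  · rintro ⟨hC1, hC2⟩
    exact admitsDirectedPP_of_potentials hC1 fun i =>
      exists_potential_of_not_hasOddWeightCycle (fun _ _ _ => resEdge_symm) (hC2 i)
end

section
/- Let A be a genotype matrix and B a haplotype matrix explaining A that satisfies the three gamete property. Let i, k, l be columns and g a row of A with g ∈ A_i and g[k] = g[l] = 2, and let h, h' be the two rows of B explaining g. If the resolution graph G_i contains an edge {k,l} of weight 1, then h[k] ≠ h[l]; if G_i contains an edge {k,l} of weight 0, then h[k] = h[l]. -/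
/-!
Write `S c` for the set of haplotypes (rows of `B`) carrying `1` at column `c`. The three gamete
property says that any two of these sets are nested or disjoint, and `ind^A ⊆ ind^B`. A row with
`2` at `k` and `l` is resolved with `h[k] ≠ h[l]` exactly when `S k` and `S l` are disjoint, which
settles the weight-1 edges and the weight-0 edges with `11 ∈ ind^A(k,l)`.

For the remaining weight-0 edges, a second row `g₂ ∈ A_j`, `j ≠ i`, has `2` at `k` and `l` too.
As no `2`-column of `g` is `≻ i`, one of `S k`, `S l` lies in `S i` and the other is disjoint from
it, so `g₂[i] = 2`; symmetrically `g[j] = 2`. Say `i < j`. Since `j` is the least maximal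
`2`-column of `g₂`, some `2`-column `c` of `g₂` has `c ≻ i`, whence `g[c] = 1` and
`S k, S l ⊆ S c`; but the haplotype of `g₂` outside `S c` lies in `S k` or in `S l`.
-/

section ResolutionGraph

variable {n m : ℕ} {A : Fin n → Fin m → Fin 3} {B₁ B₂ : Fin n → Fin m → Bool}

def haplotypes (B₁ B₂ : Fin n → Fin m → Bool) : Set (Fin m → Bool) :=
  Set.range B₁ ∪ Set.range B₂

lemma fst_mem_haplotypes (r : Fin n) : B₁ r ∈ haplotypes B₁ B₂ := Or.inl ⟨r, rfl⟩

lemma snd_mem_haplotypes (r : Fin n) : B₂ r ∈ haplotypes B₁ B₂ := Or.inr ⟨r, rfl⟩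

lemma mem_indB_of_mem_haplotypes {x : Fin m → Bool} (hx : x ∈ haplotypes B₁ B₂)
    {c d : Fin m} {u v : Bool} (hc : x c = u) (hd : x d = v) : (u, v) ∈ indB B₁ B₂ c d := by
  subst hc hd
  rcases hx with ⟨r, rfl⟩ | ⟨r, rfl⟩
  exacts [⟨r, Or.inl ⟨rfl, rfl⟩⟩, ⟨r, Or.inr ⟨rfl, rfl⟩⟩]

namespace ExplainsRow

variable {h h' : Fin m → Bool} {g : Fin m → Fin 3} {j : Fin m}

lemma symm (H : ExplainsRow h h' g) : ExplainsRow h' h g := fun j =>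
  ⟨fun hj => ((H j).1 hj).symm, fun hj => ((H j).2.1 hj).symm, fun hj => ((H j).2.2 hj).symm⟩

lemma snd_eq_not (H : ExplainsRow h h' g) (hj : g j = 2) : h' j = !h j := by
  have := (H j).2.2 hj
  revert this
  cases h j <;> cases h' j <;> decide

lemma eq_of_eq_boolToFin3 (H : ExplainsRow h h' g) {v : Bool} (hj : g j = boolToFin3 v) :
    h j = v ∧ h' j = v := by
  cases v
  exacts [(H j).1 hj, (H j).2.1 hj]

lemma eq_two_of_ne (H : ExplainsRow h h' g) (hj : h j ≠ h' j) : g j = 2 := by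
  obtain h0 | h1 | h2 : g j = 0 ∨ g j = 1 ∨ g j = 2 := by omega
  · exact absurd (((H j).1 h0).1.trans ((H j).1 h0).2.symm) hj
  · exact absurd (((H j).2.1 h1).1.trans ((H j).2.1 h1).2.symm) hj
  · exact h2

end ExplainsRow

namespace Explains

lemma exists_explainsRow (hexp : Explains B₁ B₂ A) {a : Fin n} {c : Fin m} (hc : A a c = 2)
    (v : Bool) : ∃ x y, x ∈ haplotypes B₁ B₂ ∧ y ∈ haplotypes B₁ B₂ ∧
      ExplainsRow x y (A a) ∧ x c = v := by
  by_cases h : B₁ a c = v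
  · exact ⟨B₁ a, B₂ a, fst_mem_haplotypes a, snd_mem_haplotypes a, hexp a, h⟩
  · refine ⟨B₂ a, B₁ a, snd_mem_haplotypes a, fst_mem_haplotypes a, (hexp a).symm, ?_⟩
    rw [(hexp a).snd_eq_not hc]
    cases v <;> simpa using h

lemma indA_subset_indB (hexp : Explains B₁ B₂ A) (c d : Fin m) :
    indA A c d ⊆ indB B₁ B₂ c d := by
  rintro ⟨u, v⟩ ⟨a, ⟨hc, hd⟩ | ⟨hc, hd⟩ | ⟨hc, hd⟩⟩
  · exact mem_indB_of_mem_haplotypes (fst_mem_haplotypes a)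
      ((hexp a).eq_of_eq_boolToFin3 hc).1 ((hexp a).eq_of_eq_boolToFin3 hd).1
  · obtain ⟨x, _, hx, -, hxy, hxd⟩ := hexp.exists_explainsRow hd v
    exact mem_indB_of_mem_haplotypes hx (hxy.eq_of_eq_boolToFin3 hc).1 hxd
  · obtain ⟨x, _, hx, -, hxy, hxc⟩ := hexp.exists_explainsRow hc u
    exact mem_indB_of_mem_haplotypes hx hxc (hxy.eq_of_eq_boolToFin3 hd).1

/-- `(true, false) ∉ ind^B(k,i)` says `S k ⊆ S i`, and `(true, true) ∉ ind^B(i,l)` says that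
`S i` and `S l` are disjoint. -/
lemma eq_two_of_subset_of_disjoint (hexp : Explains B₁ B₂ A)
    {i k l : Fin m} (hki : ((true, false) : Bool × Bool) ∉ indB B₁ B₂ k i)
    (hil : ((true, true) : Bool × Bool) ∉ indB B₁ B₂ i l) {b : Fin n}
    (hbk : A b k = 2) (hbl : A b l = 2) : A b i = 2 := by
  obtain ⟨p, q, hp, hq, hpq, hpk⟩ := hexp.exists_explainsRow hbk true
  have hpi : p i = true := by
    by_contra h
    exact hki (mem_indB_of_mem_haplotypes hp hpk (by simpa using h))
  have hpl : p l = false := by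
    by_contra h
    exact hil (mem_indB_of_mem_haplotypes hp hpi (by simpa using h))
  have hqi : q i = false := by
    by_contra h
    exact hil (mem_indB_of_mem_haplotypes hq (by simpa using h)
      (by simp [hpq.snd_eq_not hbl, hpl]))
  exact hpq.eq_two_of_ne (by simp [hpi, hqi])

end Explains

lemma false_true_mem_indA_of_not_colGreater {c d : Fin m} (h : ¬ ColGreater A c d) {r : Fin n}
    (hr : A r c ≠ A r d) : ((false, true) : Bool × Bool) ∈ indA A c d := by
  by_contra hft
  refine h ⟨?_, r, hr⟩
  rintro ⟨_ | _, _ | _⟩ hp <;> simp_all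

lemma eq_one_of_mem_rowSet_of_colGreater {i c : Fin m} {a : Fin n} (ha : a ∈ rowSet A i)
    (hci : c ≠ i) (hc : ColGreater A c i) : A a c = 1 := by
  obtain h0 | h1 | h2 : A a c = 0 ∨ A a c = 1 ∨ A a c = 2 := by omega
  · have hft : ((false, true) : Bool × Bool) ∈ indA A c i :=
      ⟨a, Or.inr (Or.inl ⟨h0, ha.1⟩)⟩
    simpa using hc.1 hft
  · exact h1
  · exact absurd hc (ha.2.1 c hci h2)

namespace ThreeGamete

variable {c d : Fin m}

lemma false_of_mem (h3 : ThreeGamete B₁ B₂)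
    (h01 : ((false, true) : Bool × Bool) ∈ indB B₁ B₂ c d)
    (h10 : ((true, false) : Bool × Bool) ∈ indB B₁ B₂ c d)
    (h11 : ((true, true) : Bool × Bool) ∈ indB B₁ B₂ c d) : False := by
  refine h3 c d fun p hp => ?_
  simp only [Set.mem_insert_iff, Set.mem_singleton_iff] at hp
  rcases hp with rfl | rfl | rfl <;> assumption

lemma ne_iff_true_true_not_mem_indB (h3 : ThreeGamete B₁ B₂) {x y : Fin m → Bool}
    (hx : x ∈ haplotypes B₁ B₂) (hy : y ∈ haplotypes B₁ B₂) {g : Fin m → Fin 3}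
    (hxy : ExplainsRow x y g) {k l : Fin m} (hk : g k = 2) (hl : g l = 2) :
    x k ≠ x l ↔ ((true, true) : Bool × Bool) ∉ indB B₁ B₂ k l := by
  have hyk := hxy.snd_eq_not hk
  have hyl := hxy.snd_eq_not hl
  constructor
  · intro hsplit htt
    cases hxk : x k
    · have hxl : x l = true := by rw [Bool.eq_not.mpr hsplit.symm, hxk]; rfl
      exact h3.false_of_mem (mem_indB_of_mem_haplotypes hx hxk hxl)
        (mem_indB_of_mem_haplotypes hy (by simp [hyk, hxk]) (by simp [hyl, hxl])) htt
    · have hxl : x l = false := by rw [Bool.eq_not.mpr hsplit.symm, hxk]; rfl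
      exact h3.false_of_mem
        (mem_indB_of_mem_haplotypes hy (by simp [hyk, hxk]) (by simp [hyl, hxl]))
        (mem_indB_of_mem_haplotypes hx hxk hxl) htt
  · intro htt heq
    cases hxk : x k
    · exact htt (mem_indB_of_mem_haplotypes hy (by simp [hyk, hxk])
        (by simp [hyl, ← heq, hxk]))
    · exact htt (mem_indB_of_mem_haplotypes hx hxk (heq ▸ hxk))

lemma false_true_not_mem_indB (h3 : ThreeGamete B₁ B₂) (hexp : Explains B₁ B₂ A) {a : Fin n}
    (hc : A a c = 1) (hd : A a d = 2) : ((false, true) : Bool × Bool) ∉ indB B₁ B₂ c d := by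
  obtain ⟨x, y, hx, hy, hxy, hxd⟩ := hexp.exists_explainsRow hd true
  refine fun hft => h3.false_of_mem hft
    (mem_indB_of_mem_haplotypes hy ((hxy c).2.1 hc).2 ?_)
    (mem_indB_of_mem_haplotypes hx ((hxy c).2.1 hc).1 hxd)
  simp [hxy.snd_eq_not hd, hxd]

lemma true_true_mem_indB_of_one_two_two (h3 : ThreeGamete B₁ B₂) (hexp : Explains B₁ B₂ A)
    {a b : Fin n} {k l : Fin m} (hac : A a c = 1) (hak : A a k = 2) (hal : A a l = 2)
    (hbc : A b c = 2) (hbk : A b k = 2) (hbl : A b l = 2) :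
    ((true, true) : Bool × Bool) ∈ indB B₁ B₂ k l := by
  by_contra hkl
  obtain ⟨x, y, hx, hy, hxy, hxc⟩ := hexp.exists_explainsRow hbc false
  have hsplit : x k ≠ x l := (h3.ne_iff_true_true_not_mem_indB hx hy hxy hbk hbl).2 hkl
  cases hxk : x k
  · have hxl : x l = true := by rw [Bool.eq_not.mpr hsplit.symm, hxk]; rfl
    exact h3.false_true_not_mem_indB hexp hac hal (mem_indB_of_mem_haplotypes hx hxc hxl)
  · exact h3.false_true_not_mem_indB hexp hac hak (mem_indB_of_mem_haplotypes hx hxc hxk)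

lemma eq_two_of_mem_rowSet (h3 : ThreeGamete B₁ B₂) (hexp : Explains B₁ B₂ A)
    {i k l : Fin m} {a b : Fin n} (ha : a ∈ rowSet A i) (hak : A a k = 2) (hal : A a l = 2)
    (hkl : ((true, true) : Bool × Bool) ∉ indB B₁ B₂ k l) (hbk : A b k = 2)
    (hbl : A b l = 2) : A b i = 2 := by
  obtain ⟨x, y, hx, hy, hxy, hxi⟩ := hexp.exists_explainsRow ha.1 true
  have hsplit : x k ≠ x l := (h3.ne_iff_true_true_not_mem_indB hx hy hxy hak hal).2 hkl
  by_contra hbi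
  have hft : ∀ c, A a c = 2 → A b c = 2 →
      ((false, true) : Bool × Bool) ∈ indB B₁ B₂ c i :=
    fun c hac hbc => hexp.indA_subset_indB c i <|
      false_true_mem_indA_of_not_colGreater (ha.2.1 c (by rintro rfl; exact hbi hbc) hac)
        (r := b) (by rw [hbc]; exact Ne.symm hbi)
  -- `x ∈ S c ∩ S i` and `S i ⊄ S c` (no `2`-column of `a` is `≻ i`) give `S c ⊆ S i`,
  -- while `x` and `y` make `S i` and `S d` disjoint.
  have key : ∀ c d, A a c = 2 → A a d = 2 → A b c = 2 → A b d = 2 →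
      x c = true → x d = false → False := by
    intro c d hac had hbc hbd hxc hxd
    refine hbi (hexp.eq_two_of_subset_of_disjoint (k := c) (l := d) (fun h => ?_) (fun h => ?_)
      hbc hbd)
    · exact h3.false_of_mem (hft c hac hbc) h (mem_indB_of_mem_haplotypes hx hxc hxi)
    · exact h3.false_of_mem
        (mem_indB_of_mem_haplotypes hy (by simp [hxy.snd_eq_not ha.1, hxi])
          (by simp [hxy.snd_eq_not had, hxd]))
        (mem_indB_of_mem_haplotypes hx hxi hxd) h
  cases hxk : x k
  · exact key l k hal hak hbl hbk (by rw [Bool.eq_not.mpr hsplit.symm, hxk]; rfl) hxk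
  · exact key k l hak hal hbk hbl hxk (by rw [Bool.eq_not.mpr hsplit.symm, hxk]; rfl)

lemma true_true_mem_indB_of_mem_rowSet_of_lt (h3 : ThreeGamete B₁ B₂)
    (hexp : Explains B₁ B₂ A) {i j k l : Fin m} {a b : Fin n} (hij : i < j)
    (ha : a ∈ rowSet A i) (hb : b ∈ rowSet A j)
    (hbi : A b i = 2) (hak : A a k = 2) (hal : A a l = 2) (hbk : A b k = 2) (hbl : A b l = 2) :
    ((true, true) : Bool × Bool) ∈ indB B₁ B₂ k l := by
  obtain ⟨c, hci, hbc, hc⟩ : ∃ c, c ≠ i ∧ A b c = 2 ∧ ColGreater A c i := by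
    by_contra! h
    exact hij.not_gt (hb.2.2 i hij.ne ⟨hbi, h⟩)
  exact h3.true_true_mem_indB_of_one_two_two hexp (eq_one_of_mem_rowSet_of_colGreater ha hci hc)
    hak hal hbc hbk hbl

lemma true_true_mem_indB_of_mem_rowSet (h3 : ThreeGamete B₁ B₂) (hexp : Explains B₁ B₂ A)
    {i j k l : Fin m} {a b : Fin n} (hij : i ≠ j) (ha : a ∈ rowSet A i) (hb : b ∈ rowSet A j)
    (hak : A a k = 2) (hal : A a l = 2) (hbk : A b k = 2) (hbl : A b l = 2) :
    ((true, true) : Bool × Bool) ∈ indB B₁ B₂ k l := by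
  by_contra hkl
  have hbi := h3.eq_two_of_mem_rowSet hexp ha hak hal hkl hbk hbl
  have haj := h3.eq_two_of_mem_rowSet hexp hb hbk hbl hkl hak hal
  rcases hij.lt_or_gt with h | h
  · exact hkl (h3.true_true_mem_indB_of_mem_rowSet_of_lt hexp h ha hb hbi hak hal hbk hbl)
  · exact hkl (h3.true_true_mem_indB_of_mem_rowSet_of_lt hexp h hb ha haj hbk hbl hak hal)

end ThreeGamete

end ResolutionGraph

/-- Let `B` be a haplotype matrix explaining `A` that satisfies the three gamete
property, let `g` (row `r` of `A`) lie in `A_i` with `g[k] = g[l] = 2`, and let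
`h = B₁ r`, `h' = B₂ r` be the explaining haplotypes of `g`. If `G_i` contains an
edge `{k,l}` of weight `1`, then `h[k] ≠ h[l]`; if `G_i` contains an edge `{k,l}`
of weight `0`, then `h[k] = h[l]`. -/
theorem resolution_edge_forces_resolution {n m : ℕ} (A : Fin n → Fin m → Fin 3)
    (B₁ B₂ : Fin n → Fin m → Bool) (hexp : Explains B₁ B₂ A) (h3 : ThreeGamete B₁ B₂)
    (i k l : Fin m) (r : Fin n) (hr : r ∈ rowSet A i)
    (hk : A r k = 2) (hl : A r l = 2) :
    (resEdge A i k l 1 → B₁ r k ≠ B₁ r l) ∧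
    (resEdge A i k l 0 → B₁ r k = B₁ r l) := by
  have hsplit := h3.ne_iff_true_true_not_mem_indB (fst_mem_haplotypes r) (snd_mem_haplotypes r)
    (hexp r) hk hl
  constructor
  · rintro ⟨-, -, ⟨h0, -⟩ | ⟨-, hsep⟩⟩
    · exact absurd h0 one_ne_zero
    exact hsplit.2 (h3.false_of_mem (hexp.indA_subset_indB k l (hsep (by simp)))
      (hexp.indA_subset_indB k l (hsep (by simp))))
  · rintro ⟨-, -, ⟨-, htt | ⟨j, hji, r₂, hr₂, hr₂k, hr₂l⟩⟩ | ⟨h1, -⟩⟩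
    · exact not_not.mp fun hne => hsplit.1 hne (hexp.indA_subset_indB k l htt)
    · exact not_not.mp fun hne => hsplit.1 hne
        (h3.true_true_mem_indB_of_mem_rowSet hexp hji.symm hr hr₂ hk hl hr₂k hr₂l)
    · exact absurd h1 zero_ne_one
end

section
/- Let A be a genotype matrix and let A' be obtained from A by exchanging all 0-entries and 1-entries in every column in which a 1-entry appears in an earlier row than every 0-entry (i.e., the first entry of the column different from 2 equals 1). Then A admits a perfect phylogeny if, and only if, A' admits a directed perfect phylogeny. -/
/-- In column `j` of `A`, the first entry different from `2` equals `1`. -/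
def FirstNonTwoIsOne {n m : ℕ} (A : Fin n → Fin m → Fin 3) (j : Fin m) : Prop :=
  ∃ r : Fin n, A r j = 1 ∧ ∀ r' : Fin n, r' < r → A r' j = 2

/-- Exchange `0`-entries and `1`-entries, keeping `2`-entries. -/
def flipEntry (x : Fin 3) : Fin 3 := if x = 0 then 1 else if x = 1 then 0 else 2

open Classical in
/-- The matrix `A'` obtained from `A` by exchanging all `0`-entries and `1`-entries
in every column in which a `1`-entry appears in an earlier row than every `0`-entry. -/
noncomputable def normalizeCols {n m : ℕ} (A : Fin n → Fin m → Fin 3) : Fin n → Fin m → Fin 3 :=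
  fun r j => if FirstNonTwoIsOne A j then flipEntry (A r j) else A r j

/-!
Flipping `0` and `1` in a set of columns of a genotype matrix and of an explaining haplotype
matrix preserves both the explanation and the four gamete property, so `A` admits a perfect
phylogeny iff `normalizeCols A` does. In `normalizeCols A` every `1`-entry of a column lies
below a `0`-entry of that column. For such a matrix, an explaining haplotype matrix whose columns
`i`, `j` induce `11` but not `00` is impossible: the earliest `1` in column `i` or `j` lies below
a `0` in its own column, and since `00` is missing, that earlier row is `1` in the other column.
So `{01, 10, 11} ⊆ ind(i, j)` forces `00 ∈ ind(i, j)`, and four gametes give three gametes.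
-/

def genotypeOf (x y : Bool) : Fin 3 := if x = y then boolToFin3 x else 2

section Explains

variable {n m : ℕ}

theorem explainsRow_iff {h h' : Fin m → Bool} {g : Fin m → Fin 3} :
    ExplainsRow h h' g ↔ ∀ j, g j = genotypeOf (h j) (h' j) := by
  have entry : ∀ (a : Fin 3) (x y : Bool),
      ((a = 0 → x = false ∧ y = false) ∧ (a = 1 → x = true ∧ y = true) ∧ (a = 2 → x ≠ y)) ↔
        a = genotypeOf x y := by
    decide
  exact forall_congr' fun j => entry _ _ _

theorem explains_iff {B₁ B₂ : Fin n → Fin m → Bool} {A : Fin n → Fin m → Fin 3} :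
    Explains B₁ B₂ A ↔ ∀ r j, A r j = genotypeOf (B₁ r j) (B₂ r j) :=
  forall_congr' fun _ => explainsRow_iff

end Explains

section FlipCols

variable {n m : ℕ}

def flipCols (c : Fin m → Bool) (B : Fin n → Fin m → Bool) : Fin n → Fin m → Bool :=
  fun r j => xor (c j) (B r j)

def flipGenotypeCols (c : Fin m → Bool) (A : Fin n → Fin m → Fin 3) : Fin n → Fin m → Fin 3 :=
  fun r j => if c j then flipEntry (A r j) else A r j

@[simp]
theorem flipCols_flipCols (c : Fin m → Bool) (B : Fin n → Fin m → Bool) :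
    flipCols c (flipCols c B) = B := by
  funext r j
  simp [flipCols]

open Classical in
theorem normalizeCols_eq_flipGenotypeCols (A : Fin n → Fin m → Fin 3) :
    normalizeCols A = flipGenotypeCols (fun j => decide (FirstNonTwoIsOne A j)) A := by
  funext r j
  simp [normalizeCols, flipGenotypeCols]

theorem explains_flipCols_iff (c : Fin m → Bool) {B₁ B₂ : Fin n → Fin m → Bool}
    {A : Fin n → Fin m → Fin 3} :
    Explains (flipCols c B₁) (flipCols c B₂) (flipGenotypeCols c A) ↔ Explains B₁ B₂ A := by
  have entry : ∀ (b : Bool) (a : Fin 3) (x y : Bool),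
      (if b then flipEntry a else a) = genotypeOf (xor b x) (xor b y) ↔ a = genotypeOf x y := by
    decide
  simp only [explains_iff, flipGenotypeCols, flipCols]
  exact forall₂_congr fun r j => entry _ _ _ _

theorem mem_indB_flipCols_iff (c : Fin m → Bool) {B₁ B₂ : Fin n → Fin m → Bool} {i j : Fin m}
    {p : Bool × Bool} :
    p ∈ indB (flipCols c B₁) (flipCols c B₂) i j ↔
      (xor (c i) p.1, xor (c j) p.2) ∈ indB B₁ B₂ i j := by
  have entry : ∀ b x y : Bool, xor b x = y ↔ x = xor b y := by decide
  simp only [indB, flipCols, Set.mem_ofPred_eq, entry]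

theorem fourGamete_iff {B₁ B₂ : Fin n → Fin m → Bool} :
    FourGamete B₁ B₂ ↔ ∀ i j, ∃ p, p ∉ indB B₁ B₂ i j := by
  have full : ({(false, false), (false, true), (true, false), (true, true)} : Set (Bool × Bool)) =
      Set.univ := by
    ext ⟨a, b⟩
    cases a <;> cases b <;> simp
  simp only [FourGamete, full, ne_eq, Set.eq_univ_iff_forall, not_forall]

theorem fourGamete_flipCols_iff (c : Fin m → Bool) {B₁ B₂ : Fin n → Fin m → Bool} :
    FourGamete (flipCols c B₁) (flipCols c B₂) ↔ FourGamete B₁ B₂ := by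
  simp only [fourGamete_iff, mem_indB_flipCols_iff]
  refine forall₂_congr fun i j => ⟨fun ⟨p, hp⟩ => ⟨_, hp⟩, fun ⟨p, hp⟩ => ?_⟩
  exact ⟨(xor (c i) p.1, xor (c j) p.2), by simpa using hp⟩

end FlipCols

theorem ThreeGamete.fourGamete {n m : ℕ} {B₁ B₂ : Fin n → Fin m → Bool}
    (h : ThreeGamete B₁ B₂) : FourGamete B₁ B₂ := by
  intro i j hfull
  apply h i j
  rw [hfull]
  intro p hp
  simp only [Set.mem_insert_iff, Set.mem_singleton_iff] at hp ⊢
  tauto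

section Normalized

variable {n m : ℕ}

def OnesPrecededByZero (A : Fin n → Fin m → Fin 3) (j : Fin m) : Prop :=
  ∀ r, A r j = 1 → ∃ r' < r, A r' j = 0

theorem onesPrecededByZero_of_not_firstNonTwoIsOne {A : Fin n → Fin m → Fin 3} {j : Fin m}
    (h : ¬FirstNonTwoIsOne A j) : OnesPrecededByZero A j := by
  intro r
  induction r using WellFoundedLT.induction with
  | _ r ih =>
    intro hr
    obtain ⟨r', hr', hne⟩ : ∃ r' < r, A r' j ≠ 2 := by
      by_contra! h'
      exact h ⟨r, hr, h'⟩
    by_cases h0 : A r' j = 0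
    · exact ⟨r', hr', h0⟩
    · obtain ⟨r'', hr'', h0⟩ := ih r' hr' (by omega)
      exact ⟨r'', hr''.trans hr', h0⟩

theorem onesPrecededByZero_normalizeCols (A : Fin n → Fin m → Fin 3) (j : Fin m) :
    OnesPrecededByZero (normalizeCols A) j := by
  by_cases hf : FirstNonTwoIsOne A j
  · have hA : ∀ r, normalizeCols A r j = flipEntry (A r j) := fun r => if_pos hf
    have flip_one : ∀ a, flipEntry a = 1 ↔ a = 0 := by decide
    obtain ⟨r₀, h1, h2⟩ := hf
    intro r hr
    rw [hA, flip_one] at hr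
    refine ⟨r₀, ?_, by rw [hA, h1]; rfl⟩
    by_contra! hle
    rcases hle.lt_or_eq with hlt | rfl
    · rw [h2 r hlt] at hr
      exact absurd hr (by decide)
    · rw [h1] at hr
      exact absurd hr (by decide)
  · have hA : ∀ r, normalizeCols A r j = A r j := fun r => if_neg hf
    simpa only [OnesPrecededByZero, hA] using onesPrecededByZero_of_not_firstNonTwoIsOne hf

end Normalized

section Gametes

variable {n m : ℕ} {B₁ B₂ : Fin n → Fin m → Bool} {A : Fin n → Fin m → Fin 3} {i j : Fin m}

theorem mem_indB_swap {p : Bool × Bool} : p ∈ indB B₁ B₂ i j ↔ p.swap ∈ indB B₁ B₂ j i := by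
  simp only [indB, Set.mem_ofPred_eq, Prod.fst_swap, Prod.snd_swap, and_comm]

theorem Explains.eq_one_of_eq_zero (hE : Explains B₁ B₂ A)
    (h00 : (false, false) ∉ indB B₁ B₂ i j) {r : Fin n} (h : A r i = 0) : A r j = 1 := by
  have entry : ∀ x y x' y' : Bool, ¬(x = false ∧ y = false) → ¬(x' = false ∧ y' = false) →
      genotypeOf x x' = 0 → genotypeOf y y' = 1 := by
    decide
  rw [explains_iff] at hE
  rw [hE] at h ⊢
  exact entry _ _ _ _ (fun hx => h00 ⟨r, .inl hx⟩) (fun hx => h00 ⟨r, .inr hx⟩) h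

theorem Explains.exists_eq_one (hE : Explains B₁ B₂ A) (h00 : (false, false) ∉ indB B₁ B₂ i j)
    (h11 : (true, true) ∈ indB B₁ B₂ i j) : ∃ r, A r i = 1 ∨ A r j = 1 := by
  have entry : ∀ x y x' y' : Bool, ¬(x = false ∧ y = false) → ¬(x' = false ∧ y' = false) →
      (x = true ∧ y = true) ∨ (x' = true ∧ y' = true) →
      genotypeOf x x' = 1 ∨ genotypeOf y y' = 1 := by
    decide
  obtain ⟨r, h⟩ := h11
  rw [explains_iff] at hE
  refine ⟨r, ?_⟩
  rw [hE r i, hE r j]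
  exact entry _ _ _ _ (fun hx => h00 ⟨r, .inl hx⟩) (fun hx => h00 ⟨r, .inr hx⟩) h

theorem Explains.false_false_mem_indB (hE : Explains B₁ B₂ A) (hi : OnesPrecededByZero A i)
    (hj : OnesPrecededByZero A j) (h11 : (true, true) ∈ indB B₁ B₂ i j) :
    (false, false) ∈ indB B₁ B₂ i j := by
  by_contra h00
  have h00' : (false, false) ∉ indB B₁ B₂ j i := fun h => h00 (mem_indB_swap.2 h)
  have no_one : ∀ r, ¬(A r i = 1 ∨ A r j = 1) := by
    intro r
    induction r using WellFoundedLT.induction with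
    | _ r ih =>
      rintro (h1 | h1)
      · obtain ⟨r', hr', h0⟩ := hi r h1
        exact ih r' hr' (.inr (hE.eq_one_of_eq_zero h00 h0))
      · obtain ⟨r', hr', h0⟩ := hj r h1
        exact ih r' hr' (.inl (hE.eq_one_of_eq_zero h00' h0))
  obtain ⟨r, hr⟩ := hE.exists_eq_one h00 h11
  exact no_one r hr

theorem Explains.threeGamete_of_fourGamete (hE : Explains B₁ B₂ A)
    (hA : ∀ j, OnesPrecededByZero A j) (h4 : FourGamete B₁ B₂) : ThreeGamete B₁ B₂ := by
  intro i j hsub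
  have h00 := hE.false_false_mem_indB (hA i) (hA j) (hsub (by simp))
  refine h4 i j (Set.Subset.antisymm (fun p _ => ?_) (Set.insert_subset_iff.2 ⟨h00, hsub⟩))
  rcases p with ⟨_ | _, _ | _⟩ <;> simp

end Gametes

/-- Let `A'` be obtained from `A` by exchanging all `0`-entries and `1`-entries in
every column in which a `1`-entry appears in an earlier row than every `0`-entry.
Then `A` admits a perfect phylogeny if, and only if, `A'` admits a directed perfect
phylogeny. -/
theorem pph_iff_dpph_normalize {n m : ℕ} (A : Fin n → Fin m → Fin 3) :
    AdmitsPP A ↔ AdmitsDirectedPP (normalizeCols A) := by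
  have hA := onesPrecededByZero_normalizeCols A
  obtain ⟨c, hc⟩ : ∃ c, normalizeCols A = flipGenotypeCols c A :=
    ⟨_, normalizeCols_eq_flipGenotypeCols A⟩
  rw [hc] at hA ⊢
  constructor
  · rintro ⟨B₁, B₂, hE, h4⟩
    have hE' := (explains_flipCols_iff c).2 hE
    exact ⟨_, _, hE', hE'.threeGamete_of_fourGamete hA ((fourGamete_flipCols_iff c).2 h4)⟩
  · rintro ⟨B₁, B₂, hE, h3⟩
    refine ⟨flipCols c B₁, flipCols c B₂, ?_, (fourGamete_flipCols_iff c).2 h3.fourGamete⟩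
    rw [← explains_flipCols_iff c]
    simpa using hE
end

section
/- Let A be an n×m genotype matrix. Then A admits a directed perfect phylogeny if, and only if, the (n+1)×m genotype matrix obtained from A by appending the all-0 genotype as an additional row admits a perfect phylogeny. -/
/-! The appended all-`0` genotype forces both new haplotypes to be `00…0`, which adds exactly
the gamete `00` to every induced set; and a set of gametes contains `{01,10,11}` iff adding `00`
makes it the set of all four gametes. -/

open Fin

section Snoc

variable {n m : ℕ}

theorem indB_snoc (B₁ B₂ : Fin n → Fin m → Bool) (h h' : Fin m → Bool) (i j : Fin m) :
    indB (snoc B₁ h) (snoc B₂ h') i j =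
      insert (h i, h j) (insert (h' i, h' j) (indB B₁ B₂ i j)) := by
  ext p
  simp only [indB, exists_fin_succ', snoc_castSucc, snoc_last, Set.mem_ofPred_eq,
    Set.mem_insert_iff, Prod.ext_iff]
  grind

theorem explains_snoc_iff (B₁ B₂ : Fin n → Fin m → Bool) (h h' : Fin m → Bool)
    (A : Fin n → Fin m → Fin 3) (g : Fin m → Fin 3) :
    Explains (snoc B₁ h) (snoc B₂ h') (snoc A g) ↔ Explains B₁ B₂ A ∧ ExplainsRow h h' g := by
  simp only [Explains, forall_fin_succ', snoc_castSucc, snoc_last]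

theorem admitsPP_snoc_iff (A : Fin n → Fin m → Fin 3) (g : Fin m → Fin 3) :
    AdmitsPP (snoc A g) ↔ ∃ (B₁ B₂ : Fin n → Fin m → Bool) (h h' : Fin m → Bool),
      Explains B₁ B₂ A ∧ ExplainsRow h h' g ∧ FourGamete (snoc B₁ h) (snoc B₂ h') := by
  constructor
  · rintro ⟨B₁, B₂, hE, hF⟩
    rw [← snoc_init_self B₁, ← snoc_init_self B₂, explains_snoc_iff] at hE
    exact ⟨init B₁, init B₂, B₁ (last n), B₂ (last n), hE.1, hE.2, by
      rwa [snoc_init_self, snoc_init_self]⟩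
  · rintro ⟨B₁, B₂, h, h', hE, hg, hF⟩
    exact ⟨_, _, (explains_snoc_iff B₁ B₂ h h' A g).2 ⟨hE, hg⟩, hF⟩

end Snoc

theorem explainsRow_zero_iff {m : ℕ} (h h' : Fin m → Bool) :
    ExplainsRow h h' (fun _ => 0) ↔ h = (fun _ => false) ∧ h' = (fun _ => false) := by
  simp [ExplainsRow, funext_iff, forall_and]

theorem three_gametes_subset_iff_insert_eq (S : Set (Bool × Bool)) :
    {(false, true), (true, false), (true, true)} ⊆ S ↔
      insert (false, false) S = {(false, false), (false, true), (true, false), (true, true)} := by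
  simp [Set.insert_subset_iff, Set.ext_iff, Prod.forall]

theorem threeGamete_iff_fourGamete_snoc_zero {n m : ℕ} (B₁ B₂ : Fin n → Fin m → Bool) :
    ThreeGamete B₁ B₂ ↔ FourGamete (snoc B₁ fun _ => false) (snoc B₂ fun _ => false) := by
  simp only [ThreeGamete, FourGamete, indB_snoc, Set.insert_idem,
    three_gametes_subset_iff_insert_eq]

/-- An `n × m` genotype matrix `A` admits a directed perfect phylogeny if, and only
if, the `(n+1) × m` genotype matrix obtained from `A` by appending the all-`0`
genotype as an additional row admits a perfect phylogeny. -/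
theorem dpph_iff_pph_append_zero_row {n m : ℕ} (A : Fin n → Fin m → Fin 3) :
    AdmitsDirectedPP A ↔ AdmitsPP (Fin.snoc A (fun _ => (0 : Fin 3))) := by
  simp only [admitsPP_snoc_iff, explainsRow_zero_iff, AdmitsDirectedPP,
    threeGamete_iff_fourGamete_snoc_zero]
  simp only [exists_and_left, and_assoc, exists_eq_left]
end

section
/- If B is a haplotype matrix explaining a genotype matrix A and i, j are columns such that no row g of A satisfies g[i] = 2 and g[j] = 2, then ind^A(i,j) = ind^B(i,j). -/
lemma boolToFin3_ne_two (b : Bool) : boolToFin3 b ≠ 2 := by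
  cases b <;> decide

lemma boolToFin3_injective : Function.Injective boolToFin3 := by
  decide

namespace ExplainsRow

variable {m : ℕ} {h h' : Fin m → Bool} {g : Fin m → Fin 3}

lemma eq_of_ne_two (he : ExplainsRow h h' g) {k : Fin m} (hk : g k ≠ 2) : h k = h' k := by
  obtain ⟨h0, h1, -⟩ := he k
  match hg : g k with
  | 0 => rw [(h0 hg).1, (h0 hg).2]
  | 1 => rw [(h1 hg).1, (h1 hg).2]
  | 2 => exact absurd hg hk

lemma eq_boolToFin3_of_ne_two (he : ExplainsRow h h' g) {k : Fin m} (hk : g k ≠ 2) :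
    g k = boolToFin3 (h k) := by
  obtain ⟨h0, h1, -⟩ := he k
  match hg : g k with
  | 0 => rw [(h0 hg).1]; rfl
  | 1 => rw [(h1 hg).1]; rfl
  | 2 => exact absurd hg hk

lemma eq_boolToFin3_iff (he : ExplainsRow h h' g) {k : Fin m} (hk : g k ≠ 2) (b : Bool) :
    g k = boolToFin3 b ↔ h k = b := by
  rw [he.eq_boolToFin3_of_ne_two hk, boolToFin3_injective.eq_iff]

lemma exists_eq_iff (he : ExplainsRow h h' g) (k : Fin m) (b : Bool) :
    (h k = b ∨ h' k = b) ↔ (g k = boolToFin3 b ∨ g k = 2) := by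
  by_cases hk : g k = 2
  · have hne := (he k).2.2 hk
    simp only [hk, or_true, iff_true]
    exact (by decide : ∀ u v b : Bool, u ≠ v → u = b ∨ v = b) _ _ b hne
  · rw [← he.eq_of_ne_two hk, or_self, he.eq_boolToFin3_iff hk]
    simp [hk]

/-- Once one of the two columns is not heterozygous, the haplotypes agree there, so only the
other column can split. -/
lemma induced_pair_iff (he : ExplainsRow h h' g) {i j : Fin m} (hij : ¬ (g i = 2 ∧ g j = 2))
    (x y : Bool) :
    ((g i = boolToFin3 x ∧ g j = boolToFin3 y) ∨ (g i = boolToFin3 x ∧ g j = 2) ∨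
        (g i = 2 ∧ g j = boolToFin3 y)) ↔
      ((h i = x ∧ h j = y) ∨ (h' i = x ∧ h' j = y)) := by
  by_cases hi : g i = 2
  · have hj : g j ≠ 2 := fun hj => hij ⟨hi, hj⟩
    rw [← he.eq_of_ne_two hj, ← or_and_right, he.exists_eq_iff, ← he.eq_boolToFin3_iff hj]
    simp [hi, (boolToFin3_ne_two x).symm]
  · rw [← he.eq_of_ne_two hi, ← and_or_left, he.exists_eq_iff, ← he.eq_boolToFin3_iff hi,
      and_or_left]
    simp only [hi, false_and, or_false]

end ExplainsRow

/-- If `B` is a haplotype matrix explaining a genotype matrix `A` and `i, j` are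
columns such that no row `g` of `A` satisfies `g[i] = 2` and `g[j] = 2`, then
`ind^A(i,j) = ind^B(i,j)`. -/
theorem indA_eq_indB_of_no_double_two {n m : ℕ} (A : Fin n → Fin m → Fin 3)
    (B₁ B₂ : Fin n → Fin m → Bool) (hexp : Explains B₁ B₂ A) (i j : Fin m)
    (hno : ∀ r : Fin n, ¬ (A r i = 2 ∧ A r j = 2)) :
    indA A i j = indB B₁ B₂ i j := by
  ext ⟨x, y⟩
  exact exists_congr fun r => (hexp r).induced_pair_iff (hno r) x y
end

section
/- For every genotype matrix A with columns 1, …, m, every row g of A that contains at least one 2-entry belongs to the set A_i for exactly one column i; rows without a 2-entry belong to no set A_i. -/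
/-- The rank of a genotype value in the order `0 < 2 < 1`. -/
def twoRank : Fin 3 → ℕ := ![0, 2, 1]

def rankCol {n m : ℕ} (A : Fin n → Fin m → Fin 3) (i : Fin m) : Fin n → ℕ :=
  fun r => twoRank (A r i)

def maxTwoCols {n m : ℕ} (A : Fin n → Fin m → Fin 3) (r : Fin n) : Set (Fin m) :=
  {j | A r j = 2 ∧ ∀ k : Fin m, k ≠ j → A r k = 2 → ¬ ColGreater A k j}

section ColGreater

variable {n m : ℕ} {A : Fin n → Fin m → Fin 3} {i j : Fin m}

theorem twoRank_injective : Function.Injective twoRank := by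
  decide

theorem twoRank_lt_iff (x y : Fin 3) :
    twoRank x < twoRank y ↔
      (x = boolToFin3 false ∧ y = boolToFin3 true) ∨
      (x = boolToFin3 false ∧ y = 2) ∨ (x = 2 ∧ y = boolToFin3 true) := by
  revert x y
  decide

theorem false_true_mem_indA_iff :
    (false, true) ∈ indA A i j ↔ ∃ r, rankCol A i r < rankCol A j r := by
  simp only [indA, rankCol, twoRank_lt_iff, Set.mem_ofPred_eq]

theorem indA_subset_iff :
    indA A i j ⊆ ({(false, false), (true, false), (true, true)} : Set (Bool × Bool)) ↔
      (false, true) ∉ indA A i j := by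
  refine ⟨fun h hmem => by simpa using h hmem, fun h => ?_⟩
  rintro ⟨_ | _, _ | _⟩ hp <;> simp_all

theorem colGreater_iff_rankCol_lt : ColGreater A i j ↔ rankCol A j < rankCol A i := by
  rw [ColGreater, indA_subset_iff, false_true_mem_indA_iff, lt_iff_le_and_ne,
    Function.ne_iff]
  simp only [not_exists, not_lt, Pi.le_def, rankCol, twoRank_injective.ne_iff]
  exact and_congr_right fun _ => exists_congr fun _ => ne_comm

end ColGreater

section maxTwoCols

variable {n m : ℕ} {A : Fin n → Fin m → Fin 3} {r : Fin n}

theorem mem_rowSet_iff_isLeast {i : Fin m} : r ∈ rowSet A i ↔ IsLeast (maxTwoCols A r) i := by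
  simp only [rowSet, IsLeast, maxTwoCols, lowerBounds, Set.mem_ofPred_eq]
  refine ⟨fun ⟨h2, hmax, hleast⟩ => ⟨⟨h2, hmax⟩, fun j hj => ?_⟩,
    fun ⟨hi, hleast⟩ => ⟨hi.1, hi.2, fun j hji hj => (hleast hj).lt_of_ne hji.symm⟩⟩
  rcases eq_or_ne j i with rfl | hji
  · exact le_rfl
  · exact (hleast j hji hj).le

theorem maxTwoCols_nonempty (h : ∃ j, A r j = 2) : (maxTwoCols A r).Nonempty := by
  obtain ⟨j, hj2, hjmax⟩ :=
    (Set.toFinite {j | A r j = 2}).exists_maximalFor (rankCol A) _ h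
  refine ⟨j, hj2, fun k _ hk2 hkj => ?_⟩
  rw [colGreater_iff_rankCol_lt] at hkj
  exact hkj.not_ge (hjmax hk2 hkj.le)

end maxTwoCols

/-- Every row of a genotype matrix `A` that contains at least one `2`-entry belongs
to the set `A_i` for exactly one column `i`; rows without a `2`-entry belong to no
set `A_i`. -/
theorem rowSet_partition {n m : ℕ} (A : Fin n → Fin m → Fin 3) (r : Fin n) :
    ((∃ j : Fin m, A r j = 2) → ∃! i : Fin m, r ∈ rowSet A i) ∧
    ((¬ ∃ j : Fin m, A r j = 2) → ∀ i : Fin m, r ∉ rowSet A i) := by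
  simp only [mem_rowSet_iff_isLeast]
  refine ⟨fun h => ?_, fun h i hi => h ⟨i, hi.1.1⟩⟩
  obtain ⟨i, hi⟩ := (Set.toFinite _).exists_minimal (maxTwoCols_nonempty h)
  exact ⟨i, minimal_iff_isLeast.mp hi, fun j hj => hj.unique (minimal_iff_isLeast.mp hi)⟩
end
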